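/- Let G be a cubic graph with vertex ordering v_1,…,v_n (n ≥ 4) and edge ordering e_1,…,e_m, let p, q, p', q' be positive integers, and let G' be the reduction graph. Define α₁ = n(2pq + q² + 6q + 3(p+q)(n−1)) and α₂ = m(2p'q' + q'² + 2p' + 2(p'+q')(m−1)). Then for every cut [X,Y] of G, the cut [A,B] = f(X,Y) of G' satisfies α₁ + α₂ + 2q'·|E_G(X,Y)| ≤ |E_{G'}(A,B)| ≤ α₁ + α₂ + 2q'·|E_G(X,Y)| + 9n². -/

import Mathlib

/-- The vertices of the reduction graph `G'`: for each `i ∈ [n]` a `(p,q)`-grained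
gadget `H_i` with parts `K'_i` (`vK1`), `K''_i` (`vK2`), `S'_i` (`vS1`), `S''_i` (`vS2`);
for each `j ∈ [m]` a `(p',q')`-grained gadget `E_j` with parts `K'ᵉ_j` (`eK1`),
`K''ᵉ_j` (`eK2`), `S'ᵉ_j` (`eS1`), `S''ᵉ_j` (`eS2`); and for each `j ∈ [m]` four link
vertices `link lr s j`, where `lr = false` selects the smaller endpoint index of the
edge `e_j` and `lr = true` the larger one, and `s` distinguishes `L¹` (`s = false`)
from `L²` (`s = true`). -/
inductive RVert (n m p q p' q' : ℕ) : Type where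
  | vK1 : Fin n → Fin q → RVert n m p q p' q'
  | vK2 : Fin n → Fin q → RVert n m p q p' q'
  | vS1 : Fin n → Fin p → RVert n m p q p' q'
  | vS2 : Fin n → Fin p → RVert n m p q p' q'
  | eK1 : Fin m → Fin q' → RVert n m p q p' q'
  | eK2 : Fin m → Fin q' → RVert n m p q p' q'
  | eS1 : Fin m → Fin p' → RVert n m p q p' q'
  | eS2 : Fin m → Fin p' → RVert n m p q p' q'
  | link : Bool → Bool → Fin m → RVert n m p q p' q'
  deriving DecidableEq

/-- Given the two endpoint functions `ep1 ep2 : Fin m → Fin n` of the ordered edges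
(`ep1 j < ep2 j`), the vertex index associated with the link vertex `link lr s j`. -/
def linkIdx {n m : ℕ} (ep1 ep2 : Fin m → Fin n) (lr : Bool) (j : Fin m) : Fin n :=
  if lr then ep2 j else ep1 j

/-- One-directional description of the adjacencies of the reduction graph `G'`. -/
def radj {n m p q p' q' : ℕ} (ep1 ep2 : Fin m → Fin n) :
    RVert n m p q p' q' → RVert n m p q p' q' → Prop
  | .vK1 i _, .vK1 i' _ => i = i'
  | .vK1 i _, .vK2 i' _ => i = i'
  | .vK2 i _, .vK2 i' _ => i = i'
  | .vK1 i _, .vS1 i' _ => i = i'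
  | .vK2 i _, .vS2 i' _ => i = i'
  | .eK1 j _, .eK1 j' _ => j = j'
  | .eK1 j _, .eK2 j' _ => j = j'
  | .eK2 j _, .eK2 j' _ => j = j'
  | .eK1 j _, .eS1 j' _ => j = j'
  | .eK2 j _, .eS2 j' _ => j = j'
  | .link lr _ j, .vK1 k _ => linkIdx ep1 ep2 lr j < k
  | .link lr _ j, .vK2 k _ => linkIdx ep1 ep2 lr j ≤ k
  | .link lr _ j, .vS1 k _ => linkIdx ep1 ep2 lr j < k
  | .link lr _ j, .vS2 k _ => linkIdx ep1 ep2 lr j < k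
  | .link _ _ j, .eK1 l _ => l ≤ j
  | .link _ _ j, .eK2 l _ => l < j
  | .link lr _ j, .eS1 l _ => l < j ∨ (l = j ∧ lr = false)
  | .link _ _ j, .eS2 l _ => l < j
  | .link lr _ j, .link lr' _ l =>
      (linkIdx ep1 ep2 lr j < linkIdx ep1 ep2 lr' l ∧ l ≤ j) ∨
      (linkIdx ep1 ep2 lr' l < linkIdx ep1 ep2 lr j ∧ j ≤ l) ∨
      (linkIdx ep1 ep2 lr j = linkIdx ep1 ep2 lr' l ∧ j = l)
  | _, _ => False

/-- The reduction graph `G'`. -/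
def reductionGraph (n m p q p' q' : ℕ) (ep1 ep2 : Fin m → Fin n) :
    SimpleGraph (RVert n m p q p' q') where
  Adj u v := u ≠ v ∧ (radj ep1 ep2 u v ∨ radj ep1 ep2 v u)
  symm := ⟨fun u v h => ⟨h.1.symm, h.2.symm⟩⟩
  loopless := ⟨fun u h => h.1 rfl⟩


/-- Size of the cut-set of the cut `[A,B]`. -/
noncomputable def cutSize {V : Type} (G : SimpleGraph V) (A B : Set V) : ℕ :=
  {p : V × V | p.1 ∈ A ∧ p.2 ∈ B ∧ G.Adj p.1 p.2}.ncard

/-- `[A,B]` is a maximum cut of `G`. -/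
def IsMaxCut {V : Type} (G : SimpleGraph V) (A B : Set V) : Prop :=
  A ∪ B = Set.univ ∧ Disjoint A B ∧
    ∀ A' B' : Set V, A' ∪ B' = Set.univ → Disjoint A' B' →
      cutSize G A' B' ≤ cutSize G A B

/-- The part `A` of the cut `f(X,Y)` of the reduction graph associated with the
cut `[X,Y]` of `G` (the part `B` is `cutA ep1 ep2 Y X`). -/
def cutA {n m p q p' q' : ℕ} (ep1 ep2 : Fin m → Fin n) (X Y : Set (Fin n)) :
    Set (RVert n m p q p' q') := fun w =>
  match w with
  | .vK1 i _ => i ∈ X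
  | .vK2 i _ => i ∈ Y
  | .vS1 i _ => i ∈ Y
  | .vS2 i _ => i ∈ X
  | .eK1 j _ => ep1 j ∈ X
  | .eK2 j _ => ep1 j ∈ Y
  | .eS1 j _ => ep1 j ∈ Y
  | .eS2 j _ => ep1 j ∈ X
  | .link lr _ j => linkIdx ep1 ep2 lr j ∈ X


/-! `f(X,Y)` splits every gadget into two halves of `p + q` (resp. `p' + q'`) vertices, so a link
vertex adjacent to a whole gadget has exactly half of it across the cut. All cut edges except
those between two link vertices can therefore be counted exactly: `H_i` contributes `2pq + q²`
inside and `q` towards each of its six link vertices; `E_j` contributes `2p'q' + q'²` inside and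
`p'` towards each of the two link vertices of the smaller endpoint of `e_j`, while the two link
vertices of the larger endpoint see `K'ᵉ_j`, which lies on the side of the smaller endpoint, and
so contribute `2q'` exactly when `e_j` crosses `[X,Y]`. Since every vertex of the cubic graph
owns six link vertices, this sums to `α₁ + α₂ + 2q'·|E_G(X,Y)|`. The edges among link vertices
add at most `|L ∩ A| · |L ∩ B| = 36 |X| |Y| ≤ 9n²`. -/

open Finset
open scoped Classical

section CutCount

variable {V : Type} {ι κ : Type*} [Fintype ι] [Fintype κ]

noncomputable def cutCount (G : SimpleGraph V) (A : Set V) (f : ι → V) (g : κ → V) : ℕ :=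
  ∑ a, ∑ b, if f a ∈ A ∧ g b ∉ A ∧ G.Adj (f a) (g b) then 1 else 0

noncomputable def crossCount (G : SimpleGraph V) (A : Set V) (f : ι → V) (g : κ → V) : ℕ :=
  ∑ a, ∑ b, if G.Adj (f a) (g b) ∧ (f a ∈ A ↔ g b ∉ A) then 1 else 0

variable {G : SimpleGraph V} {A : Set V}

lemma cutSize_eq_sum [Fintype V] (X Y : Set V) :
    cutSize G X Y = ∑ u, ∑ v, if u ∈ X ∧ v ∈ Y ∧ G.Adj u v then 1 else 0 := by
  rw [cutSize, Set.ncard_eq_toFinset_card', Set.toFinset_ofPred, card_filter,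
    Fintype.sum_prod_type]

lemma cutSize_eq_cutCount [Fintype V] (e : ι ≃ V) : cutSize G A Aᶜ = cutCount G A e e := by
  rw [cutSize_eq_sum, cutCount, ← e.sum_comp]
  simp only [Set.mem_compl_iff, ← e.sum_comp]

lemma cutCount_sumElim_left {ι' : Type*} [Fintype ι'] (f₁ : ι → V) (f₂ : ι' → V) (g : κ → V) :
    cutCount G A (Sum.elim f₁ f₂) g = cutCount G A f₁ g + cutCount G A f₂ g := by
  rw [cutCount, Fintype.sum_sum_type]
  rfl

lemma cutCount_sumElim_right {κ' : Type*} [Fintype κ'] (f : ι → V) (g₁ : κ → V) (g₂ : κ' → V) :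
    cutCount G A f (Sum.elim g₁ g₂) = cutCount G A f g₁ + cutCount G A f g₂ := by
  rw [cutCount, cutCount, cutCount, ← sum_add_distrib]
  refine sum_congr rfl fun a _ => ?_
  rw [Fintype.sum_sum_type]
  rfl

lemma cutCount_add_cutCount_swap (f : ι → V) (g : κ → V) :
    cutCount G A f g + cutCount G A g f = crossCount G A f g := by
  rw [cutCount, cutCount, sum_comm (s := univ (α := κ)), crossCount, ← sum_add_distrib]
  refine sum_congr rfl fun a _ => ?_
  rw [← sum_add_distrib]
  refine sum_congr rfl fun b _ => ?_
  by_cases hadj : G.Adj (f a) (g b)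
  · have := hadj.symm
    by_cases ha : f a ∈ A <;> by_cases hb : g b ∈ A <;> simp [*]
  · have : ¬G.Adj (g b) (f a) := fun h => hadj h.symm
    simp [hadj, this]

lemma cutCount_eq_zero {f : ι → V} {g : κ → V} (h : ∀ a b, ¬G.Adj (f a) (g b)) :
    cutCount G A f g = 0 := by
  simp [cutCount, h]

lemma cutCount_le (f : ι → V) (g : κ → V) :
    cutCount G A f g ≤ #{a | f a ∈ A} * #{b | g b ∉ A} := by
  rw [card_filter, card_filter, sum_mul_sum, cutCount]
  gcongr with a _ b _
  split_ifs <;> simp_all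

lemma cutCount_eq_sum_cutSize {W : Type} [Fintype W] [DecidableEq ι] {H : SimpleGraph W}
    {f : ι × W → V} (hf : ∀ i w i' w', G.Adj (f (i, w)) (f (i', w')) ↔ i = i' ∧ H.Adj w w') :
    cutCount G A f f =
      ∑ i, cutSize H ((fun w => f (i, w)) ⁻¹' A) ((fun w => f (i, w)) ⁻¹' A)ᶜ := by
  simp only [cutCount, cutSize_eq_sum, Fintype.sum_prod_type, hf]
  refine sum_congr rfl fun i _ => sum_congr rfl fun w _ => ?_
  rw [sum_eq_single i (fun i' _ hi' => by simp [Ne.symm hi']) (by simp)]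
  simp

end CutCount

section Darts

variable {V : Type} [Fintype V] {G : SimpleGraph V}

lemma sum_darts_fst (F : V → ℕ) : ∑ d : G.Dart, F d.fst = ∑ v, G.degree v * F v := by
  rw [← sum_fiberwise univ (fun d : G.Dart => d.fst)]
  refine sum_congr rfl fun v _ => ?_
  rw [sum_congr rfl fun d hd => congrArg F (mem_filter.1 hd).2, sum_const, smul_eq_mul]
  congr 1
  convert G.dart_fst_fiber_card_eq_degree v

lemma cutSize_eq_card_darts (X Y : Set V) :
    cutSize G X Y = #{d : G.Dart | d.fst ∈ X ∧ d.snd ∈ Y} := by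
  rw [cutSize, ← Set.ncard_coe_finset, ← Set.ncard_image_of_injective _
    SimpleGraph.Dart.toProd_injective]
  congr 1
  ext ⟨u, v⟩
  simp only [Set.mem_ofPred_eq, coe_filter, mem_univ, true_and, Set.mem_image]
  refine ⟨fun ⟨hu, hv, h⟩ => ⟨⟨(u, v), h⟩, ⟨hu, hv⟩, rfl⟩, ?_⟩
  rintro ⟨⟨⟨u', v'⟩, huv⟩, hd, he⟩
  obtain ⟨rfl, rfl⟩ := Prod.mk.inj he
  exact ⟨hd.1, hd.2, huv⟩

end Darts

section EdgeEnumeration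

variable {V : Type} [Preorder V] {G : SimpleGraph V} {m : ℕ} {ep1 ep2 : Fin m → V}
  (hedges : ∀ u v, G.Adj u v ↔ ∃ j, (ep1 j = u ∧ ep2 j = v) ∨ (ep1 j = v ∧ ep2 j = u))

def edgeDart : Fin m × Bool → G.Dart
  | (j, false) => ⟨(ep1 j, ep2 j), (hedges _ _).2 ⟨j, .inl ⟨rfl, rfl⟩⟩⟩
  | (j, true) => ⟨(ep2 j, ep1 j), (hedges _ _).2 ⟨j, .inr ⟨rfl, rfl⟩⟩⟩

include hedges in
lemma edgeDart_bijective (hlt : ∀ j, ep1 j < ep2 j)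
    (hinj : Function.Injective fun j => (ep1 j, ep2 j)) :
    Function.Bijective (edgeDart hedges) := by
  constructor
  · rintro ⟨j, _ | _⟩ ⟨j', _ | _⟩ h <;>
      simp only [edgeDart, SimpleGraph.Dart.mk.injEq, Prod.mk.injEq] at h
    · exact congrArg (·, false) (hinj (Prod.ext h.1 h.2))
    · exact (lt_asymm (hlt j') (by rw [← h.1, ← h.2]; exact hlt j)).elim
    · exact (lt_asymm (hlt j) (by rw [h.1, h.2]; exact hlt j')).elim
    · exact congrArg (·, true) (hinj (Prod.ext h.2 h.1))
  · rintro ⟨⟨u, v⟩, huv⟩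
    obtain ⟨j, ⟨rfl, rfl⟩ | ⟨rfl, rfl⟩⟩ := (hedges u v).1 huv
    exacts [⟨(j, false), rfl⟩, ⟨(j, true), rfl⟩]

variable [Fintype V]

include hedges in
lemma sum_darts_eq {M : Type*} [AddCommMonoid M] (hlt : ∀ j, ep1 j < ep2 j)
    (hinj : Function.Injective fun j => (ep1 j, ep2 j)) (f : V → V → M) :
    ∑ d : G.Dart, f d.fst d.snd = ∑ j, (f (ep1 j) (ep2 j) + f (ep2 j) (ep1 j)) := by
  rw [← (Equiv.ofBijective _ (edgeDart_bijective hedges hlt hinj)).sum_comp,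
    Fintype.sum_prod_type]
  simp [edgeDart, add_comm]

include hedges in
lemma sum_endpoints_eq (hlt : ∀ j, ep1 j < ep2 j)
    (hinj : Function.Injective fun j => (ep1 j, ep2 j)) (F : V → ℕ) :
    ∑ j, (F (ep1 j) + F (ep2 j)) = ∑ v, G.degree v * F v := by
  rw [← sum_darts_fst, sum_darts_eq hedges hlt hinj fun u _ => F u]

include hedges in
lemma cutSize_compl_eq_card_crossing (hlt : ∀ j, ep1 j < ep2 j)
    (hinj : Function.Injective fun j => (ep1 j, ep2 j)) (X : Set V) :
    cutSize G X Xᶜ = #{j | ¬(ep1 j ∈ X ↔ ep2 j ∈ X)} := by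
  rw [cutSize_eq_card_darts, card_filter, card_filter]
  convert sum_darts_eq (M := ℕ) hedges hlt hinj fun u v => if u ∈ X ∧ v ∈ Xᶜ then 1 else 0 using 1
  · simp
  refine sum_congr rfl fun j _ => ?_
  by_cases h1 : ep1 j ∈ X <;> by_cases h2 : ep2 j ∈ X <;> simp [h1, h2]

end EdgeEnumeration

lemma sum_ite_ite_eq {α : Type*} [Fintype α] [DecidableEq α] (P : α → Prop) [DecidablePred P]
    {a : α} (ha : ¬P a) (c d : ℕ) :
    ∑ k, (if P k then c else if k = a then d else 0) = c * #{k | P k} + d := by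
  have (k : α) : (if P k then c else if k = a then d else 0) =
      (if P k then c else 0) + (if k = a then d else 0) := by
    by_cases hk : P k
    · rw [if_pos hk, if_pos hk, if_neg fun h : k = a => ha (h ▸ hk), add_zero]
    · simp [hk]
  simp [this, sum_add_distrib, sum_ite, mul_comm]

lemma two_mul_sum_card_lt (n : ℕ) : 2 * ∑ a : Fin n, #{k | a < k} = n * (n - 1) := by
  simp only [card_filter]
  rw [sum_comm, ← Finset.sum_range_id_mul_two, ← Fin.sum_univ_eq_sum_range, mul_comm]
  congr 1
  refine sum_congr rfl fun k _ => ?_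
  rw [← card_filter, filter_gt_eq_Iio, Fin.card_Iio]

section GrainedGadget

variable {x y : ℕ}

/-- The `(x,y)`-grained gadget: `(true, inl r)`, `(false, inl r)`, `(true, inr r)` and
`(false, inr r)` are the vertices of `K'`, `K''`, `S'` and `S''`. -/
def grainedGadget (x y : ℕ) : SimpleGraph (Bool × (Fin y ⊕ Fin x)) :=
  SimpleGraph.fromRel fun g g' => g.2.isLeft ∧ (g'.2.isLeft ∨ g.1 = g'.1)

/-- Whether `g ∈ K' ∪ S''`, the half of a gadget that `f(X,Y)` puts on the side of the
corresponding vertex `v_i` (of the smaller endpoint of `e_j`). -/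
def gadgetSide : Bool × (Fin y ⊕ Fin x) → Bool
  | (h, .inl _) => h
  | (h, .inr _) => !h

lemma card_gadgetSide_eq (b : Bool) :
    #{g : Bool × (Fin y ⊕ Fin x) | gadgetSide g = b} = x + y := by
  rw [card_filter]
  cases b <;> simp [Fintype.sum_prod_type, Fintype.sum_sum_type, gadgetSide, add_comm]

lemma cutSize_grainedGadget (b : Bool) :
    cutSize (grainedGadget x y) {g | gadgetSide g = b} {g | gadgetSide g = b}ᶜ =
      2 * x * y + y ^ 2 := by
  rw [cutSize_eq_sum]
  simp only [Fintype.sum_prod_type, Fintype.sum_sum_type, Fintype.sum_bool]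
  cases b <;> simp [gadgetSide, grainedGadget] <;> ring

end GrainedGadget

namespace RVert

variable {n m p q p' q' : ℕ}

def vGadget (i : Fin n) : Bool × (Fin q ⊕ Fin p) → RVert n m p q p' q'
  | (true, .inl r) => vK1 i r
  | (false, .inl r) => vK2 i r
  | (true, .inr r) => vS1 i r
  | (false, .inr r) => vS2 i r

def eGadget (j : Fin m) : Bool × (Fin q' ⊕ Fin p') → RVert n m p q p' q'
  | (true, .inl r) => eK1 j r
  | (false, .inl r) => eK2 j r
  | (true, .inr r) => eS1 j r
  | (false, .inr r) => eS2 j r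

abbrev vGadgets (x : Fin n × (Bool × (Fin q ⊕ Fin p))) : RVert n m p q p' q' := vGadget x.1 x.2

abbrev eGadgets (x : Fin m × (Bool × (Fin q' ⊕ Fin p'))) : RVert n m p q p' q' := eGadget x.1 x.2

abbrev links (x : Bool × Bool × Fin m) : RVert n m p q p' q' := link x.1 x.2.1 x.2.2

def equivSum : (Fin n × (Bool × (Fin q ⊕ Fin p))) ⊕ (Fin m × (Bool × (Fin q' ⊕ Fin p'))) ⊕
    (Bool × Bool × Fin m) ≃ RVert n m p q p' q' where
  toFun := Sum.elim vGadgets (Sum.elim eGadgets links)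
  invFun
    | vK1 i r => .inl (i, true, .inl r)
    | vK2 i r => .inl (i, false, .inl r)
    | vS1 i r => .inl (i, true, .inr r)
    | vS2 i r => .inl (i, false, .inr r)
    | eK1 j r => .inr (.inl (j, true, .inl r))
    | eK2 j r => .inr (.inl (j, false, .inl r))
    | eS1 j r => .inr (.inl (j, true, .inr r))
    | eS2 j r => .inr (.inl (j, false, .inr r))
    | link lr s j => .inr (.inr (lr, s, j))
  left_inv := by
    rintro (⟨_, _ | _, _ | _⟩ | ⟨_, _ | _, _ | _⟩ | _) <;> rfl
  right_inv := by
    rintro (_ | _ | _ | _ | _ | _ | _ | _ | _) <;> rfl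

noncomputable instance : Fintype (RVert n m p q p' q') := .ofEquiv _ equivSum

end RVert

namespace reductionGraph

open RVert

variable {n m p q p' q' : ℕ} {ep1 ep2 : Fin m → Fin n}

lemma adj_vGadget_vGadget {i i' : Fin n} {g g' : Bool × (Fin q ⊕ Fin p)} :
    (reductionGraph n m p q p' q' ep1 ep2).Adj (vGadget i g) (vGadget i' g') ↔
      i = i' ∧ (grainedGadget p q).Adj g g' := by
  rcases g with ⟨_ | _, r | r⟩ <;> rcases g' with ⟨_ | _, r' | r'⟩ <;>
    simp [reductionGraph, radj, vGadget, grainedGadget] <;> tauto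

lemma adj_eGadget_eGadget {j j' : Fin m} {g g' : Bool × (Fin q' ⊕ Fin p')} :
    (reductionGraph n m p q p' q' ep1 ep2).Adj (eGadget j g) (eGadget j' g') ↔
      j = j' ∧ (grainedGadget p' q').Adj g g' := by
  rcases g with ⟨_ | _, r | r⟩ <;> rcases g' with ⟨_ | _, r' | r'⟩ <;>
    simp [reductionGraph, radj, eGadget, grainedGadget] <;> tauto

lemma not_adj_vGadget_eGadget {i : Fin n} {j : Fin m} {g : Bool × (Fin q ⊕ Fin p)}
    {g' : Bool × (Fin q' ⊕ Fin p')} :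
    ¬(reductionGraph n m p q p' q' ep1 ep2).Adj (vGadget i g) (eGadget j g') := by
  rcases g with ⟨_ | _, r | r⟩ <;> rcases g' with ⟨_ | _, r' | r'⟩ <;>
    simp [reductionGraph, radj, vGadget, eGadget]

lemma adj_link_vGadget {lr s : Bool} {j : Fin m} {k : Fin n} {g : Bool × (Fin q ⊕ Fin p)} :
    (reductionGraph n m p q p' q' ep1 ep2).Adj (link lr s j) (vGadget k g) ↔
      linkIdx ep1 ep2 lr j < k ∨ linkIdx ep1 ep2 lr j = k ∧ g.1 = false ∧ g.2.isLeft := by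
  rcases g with ⟨_ | _, r | r⟩ <;>
    simp [reductionGraph, radj, vGadget, le_iff_lt_or_eq]

lemma adj_link_eGadget {lr s : Bool} {j l : Fin m} {g : Bool × (Fin q' ⊕ Fin p')} :
    (reductionGraph n m p q p' q' ep1 ep2).Adj (link lr s j) (eGadget l g) ↔
      l < j ∨ l = j ∧ g.1 = true ∧ (g.2.isLeft ∨ lr = false) := by
  rcases g with ⟨_ | _, r | r⟩ <;>
    simp [reductionGraph, radj, eGadget, le_iff_lt_or_eq]

variable (X : Set (Fin n))

local notation "G'" => reductionGraph n m p q p' q' ep1 ep2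
local notation "A" => cutA (p := p) (q := q) (p' := p') (q' := q') ep1 ep2 X Xᶜ

lemma mem_cutA_link {lr s : Bool} {j : Fin m} :
    link (p := p) (q := q) (p' := p') (q' := q') lr s j ∈ cutA ep1 ep2 X Xᶜ ↔
      linkIdx ep1 ep2 lr j ∈ X :=
  Iff.rfl

lemma mem_cutA_vGadget {i : Fin n} {g : Bool × (Fin q ⊕ Fin p)} :
    vGadget (m := m) (p' := p') (q' := q') i g ∈ cutA ep1 ep2 X Xᶜ ↔
      (gadgetSide g = true ↔ i ∈ X) := by
  rcases g with ⟨_ | _, r | r⟩ <;> simp only [vGadget, gadgetSide] <;> simp <;> exact Iff.rfl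

lemma mem_cutA_eGadget {j : Fin m} {g : Bool × (Fin q' ⊕ Fin p')} :
    eGadget (n := n) (p := p) (q := q) j g ∈ cutA ep1 ep2 X Xᶜ ↔
      (gadgetSide g = true ↔ ep1 j ∈ X) := by
  rcases g with ⟨_ | _, r | r⟩ <;> simp only [eGadget, gadgetSide] <;> simp <;> exact Iff.rfl

lemma cutA_compl_swap :
    cutA (p := p) (q := q) (p' := p') (q' := q') ep1 ep2 Xᶜ X = (cutA ep1 ep2 X Xᶜ)ᶜ := by
  ext (_ | _ | _ | _ | _ | _ | _ | _ | _) <;> first | exact Iff.rfl | exact not_not.symm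

lemma cutCount_vGadgets : cutCount G' A vGadgets vGadgets = n * (2 * p * q + q ^ 2) := by
  rw [cutCount_eq_sum_cutSize fun i g i' g' => adj_vGadget_vGadget]
  have (i : Fin n) : (fun g => vGadgets (m := m) (p' := p') (q' := q') (i, g)) ⁻¹' A =
      {g | gadgetSide g = decide (i ∈ X)} := by
    ext g
    simp only [Set.mem_preimage, vGadgets, mem_cutA_vGadget, Set.mem_ofPred_eq]
    cases gadgetSide g <;> simp
  simp [this, cutSize_grainedGadget]

lemma cutCount_eGadgets : cutCount G' A eGadgets eGadgets = m * (2 * p' * q' + q' ^ 2) := by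
  rw [cutCount_eq_sum_cutSize fun j g j' g' => adj_eGadget_eGadget]
  have (j : Fin m) : (fun g => eGadgets (n := n) (p := p) (q := q) (j, g)) ⁻¹' A =
      {g | gadgetSide g = decide (ep1 j ∈ X)} := by
    ext g
    simp only [Set.mem_preimage, eGadgets, mem_cutA_eGadget, Set.mem_ofPred_eq]
    cases gadgetSide g <;> simp
  simp [this, cutSize_grainedGadget]

lemma cutCount_vGadgets_eGadgets : cutCount G' A vGadgets eGadgets = 0 :=
  cutCount_eq_zero fun _ _ => not_adj_vGadget_eGadget

lemma cutCount_eGadgets_vGadgets : cutCount G' A eGadgets vGadgets = 0 :=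
  cutCount_eq_zero fun _ _ h => not_adj_vGadget_eGadget h.symm

lemma sum_cross_link_vGadget (lr s : Bool) (j : Fin m) (k : Fin n) :
    ∑ g, (if (G').Adj (link lr s j) (vGadget k g) ∧ (link lr s j ∈ A ↔ vGadget k g ∉ A)
      then 1 else 0) =
    if linkIdx ep1 ep2 lr j < k then p + q else if k = linkIdx ep1 ep2 lr j then q else 0 := by
  simp only [adj_link_vGadget, mem_cutA_vGadget, mem_cutA_link]
  rcases lt_trichotomy (linkIdx ep1 ep2 lr j) k with h | h | h
  · by_cases ha : linkIdx ep1 ep2 lr j ∈ X <;> by_cases hk : k ∈ X <;>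
      simp [h, ha, hk, card_gadgetSide_eq]
  · subst h
    simp only [Fintype.sum_prod_type, Fintype.sum_sum_type, Fintype.sum_bool]
    by_cases ha : linkIdx ep1 ep2 lr j ∈ X <;> simp [ha, gadgetSide]
  · rw [if_neg h.not_gt, if_neg h.ne]
    refine sum_eq_zero fun g _ => if_neg ?_
    rintro ⟨h' | ⟨h', -⟩, -⟩
    exacts [h.not_gt h', h.ne' h']

lemma sum_cross_link_eGadget (lr s : Bool) (j l : Fin m) :
    ∑ g, (if (G').Adj (link lr s j) (eGadget l g) ∧ (link lr s j ∈ A ↔ eGadget l g ∉ A)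
      then 1 else 0) =
    if l < j then p' + q' else if l = j then
      (if lr then (if ¬(ep1 j ∈ X ↔ ep2 j ∈ X) then q' else 0) else p') else 0 := by
  simp only [adj_link_eGadget, mem_cutA_eGadget, mem_cutA_link]
  rcases lt_trichotomy l j with h | h | h
  · by_cases ha : linkIdx ep1 ep2 lr j ∈ X <;> by_cases hk : ep1 l ∈ X <;>
      simp [h, ha, hk, card_gadgetSide_eq]
  · subst h
    simp only [Fintype.sum_prod_type, Fintype.sum_sum_type, Fintype.sum_bool]
    cases lr <;> by_cases h1 : ep1 l ∈ X <;> by_cases h2 : ep2 l ∈ X <;>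
      simp [h1, h2, linkIdx, gadgetSide]
  · rw [if_neg h.not_gt, if_neg h.ne']
    refine sum_eq_zero fun g _ => if_neg ?_
    rintro ⟨h' | ⟨h', -⟩, -⟩
    exacts [h.not_gt h', h.ne' h']

lemma crossCount_links_eGadgets :
    crossCount G' A links eGadgets =
      2 * p' * m + 2 * (p' + q') * (m * (m - 1)) + 2 * q' * #{j | ¬(ep1 j ∈ X ↔ ep2 j ∈ X)} := by
  have hlink (x : Bool × Bool × Fin m) :
      ∑ y, (if (G').Adj (links x) (eGadgets y) ∧ (links x ∈ A ↔ eGadgets y ∉ A) then 1 else 0) =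
        (p' + q') * x.2.2 + if x.1 then (if ¬(ep1 x.2.2 ∈ X ↔ ep2 x.2.2 ∈ X) then q' else 0)
          else p' := by
    rw [Fintype.sum_prod_type]
    simp only [sum_cross_link_eGadget]
    rw [sum_ite_ite_eq (· < x.2.2) (lt_irrefl _), filter_gt_eq_Iio, Fin.card_Iio]
  have hsum : (∑ j : Fin m, (j : ℕ)) * 2 = m * (m - 1) := by
    rw [Fin.sum_univ_eq_sum_range (fun i => i) m, sum_range_id_mul_two]
  have hcross : ∑ j : Fin m, (if ¬(ep1 j ∈ X ↔ ep2 j ∈ X) then q' else 0) =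
      q' * #{j | ¬(ep1 j ∈ X ↔ ep2 j ∈ X)} := by
    rw [sum_ite, sum_const_zero, sum_const, smul_eq_mul, add_zero, mul_comm]
  simp only [crossCount, hlink, Fintype.sum_prod_type, Fintype.sum_bool, sum_add_distrib,
    ← mul_sum, hcross, if_true, Bool.false_eq_true, if_false, sum_const, card_univ,
    Fintype.card_fin, smul_eq_mul, Fintype.card_bool]
  rw [← hsum]
  ring

lemma cutSize_cutA_eq :
    cutSize G' (cutA ep1 ep2 X Xᶜ) (cutA ep1 ep2 Xᶜ X) =
      n * (2 * p * q + q ^ 2) + m * (2 * p' * q' + q' ^ 2) + crossCount G' A links vGadgets +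
        crossCount G' A links eGadgets + cutCount G' A links links := by
  rw [cutA_compl_swap, cutSize_eq_cutCount equivSum]
  change cutCount G' A (Sum.elim vGadgets (Sum.elim eGadgets links))
    (Sum.elim vGadgets (Sum.elim eGadgets links)) = _
  simp only [cutCount_sumElim_left, cutCount_sumElim_right]
  rw [← cutCount_add_cutCount_swap, ← cutCount_add_cutCount_swap, cutCount_vGadgets,
    cutCount_eGadgets, cutCount_vGadgets_eGadgets, cutCount_eGadgets_vGadgets]
  ring

variable {G : SimpleGraph (Fin n)}
  (hcubic : ∀ v : Fin n, (G.neighborSet v).ncard = 3) (hlt : ∀ j, ep1 j < ep2 j)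
  (hedges : ∀ u v : Fin n,
    G.Adj u v ↔ ∃ j, (ep1 j = u ∧ ep2 j = v) ∨ (ep1 j = v ∧ ep2 j = u))
  (hinj : Function.Injective fun j => (ep1 j, ep2 j))

include hcubic hlt hedges hinj

lemma sum_links_eq (F : Fin n → ℕ) :
    ∑ x : Bool × Bool × Fin m, F (linkIdx ep1 ep2 x.1 x.2.2) = 6 * ∑ a, F a := by
  have hdeg (v : Fin n) : G.degree v = 3 := by
    rw [← hcubic v, ← SimpleGraph.card_neighborFinset_eq_degree, ← Set.ncard_coe_finset,
      SimpleGraph.coe_neighborFinset]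
  calc ∑ x : Bool × Bool × Fin m, F (linkIdx ep1 ep2 x.1 x.2.2)
      _ = 2 * ∑ j, (F (ep1 j) + F (ep2 j)) := by
        simp only [Fintype.sum_prod_type, Fintype.sum_bool, linkIdx, sum_add_distrib]
        simp only [if_true, Bool.false_eq_true, if_false]
        omega
      _ = 6 * ∑ a, F a := by
        rw [sum_endpoints_eq hedges hlt hinj, mul_sum, mul_sum]
        simp only [hdeg]
        exact sum_congr rfl fun _ _ => by ring

lemma crossCount_links_vGadgets :
    crossCount G' A links vGadgets = 6 * q * n + 3 * (p + q) * (n * (n - 1)) := by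
  have hlink (x : Bool × Bool × Fin m) :
      ∑ y, (if (G').Adj (links x) (vGadgets y) ∧ (links x ∈ A ↔ vGadgets y ∉ A) then 1 else 0) =
        (p + q) * #{k | linkIdx ep1 ep2 x.1 x.2.2 < k} + q := by
    rw [Fintype.sum_prod_type]
    simp only [sum_cross_link_vGadget]
    rw [sum_ite_ite_eq (linkIdx ep1 ep2 x.1 x.2.2 < ·) (lt_irrefl _)]
  simp only [crossCount, hlink]
  rw [sum_links_eq hcubic hlt hedges hinj fun a => (p + q) * #{k | a < k} + q, sum_add_distrib,
    ← mul_sum, sum_const, card_univ, Fintype.card_fin, smul_eq_mul, ← two_mul_sum_card_lt]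
  ring

lemma cutCount_links_le : cutCount G' A links links ≤ 9 * n ^ 2 := by
  have hA : #{x | links (n := n) (p := p) (q := q) (p' := p') (q' := q') x ∈ A} =
      6 * #{a | a ∈ X} := by
    rw [card_filter, card_filter, ← sum_links_eq hcubic hlt hedges hinj]
    rfl
  have hB : #{x | links (n := n) (p := p) (q := q) (p' := p') (q' := q') x ∉ A} =
      6 * #{a | a ∉ X} := by
    rw [card_filter, card_filter, ← sum_links_eq hcubic hlt hedges hinj]
    rfl
  have hn : #{a | a ∈ X} + #{a | a ∉ X} = n := by
    rw [card_filter_add_card_filter_not, card_univ, Fintype.card_fin]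
  calc cutCount G' A links links ≤ #{x | links x ∈ A} * #{x | links x ∉ A} := cutCount_le _ _
    _ ≤ 9 * n ^ 2 := by
      rw [hA, hB]
      generalize #{a | a ∈ X} = u at hn ⊢
      generalize #{a | a ∉ X} = v at hn ⊢
      subst hn
      nlinarith [sq_nonneg ((u : ℤ) - v)]

end reductionGraph

theorem reductionGraph_cut_count_general (n m : ℕ) (G : SimpleGraph (Fin n))
    (hcubic : ∀ v : Fin n, (G.neighborSet v).ncard = 3)
    (ep1 ep2 : Fin m → Fin n) (hlt : ∀ j, ep1 j < ep2 j)
    (hedges : ∀ u v : Fin n,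
      G.Adj u v ↔ ∃ j, (ep1 j = u ∧ ep2 j = v) ∨ (ep1 j = v ∧ ep2 j = u))
    (hinj : Function.Injective fun j => (ep1 j, ep2 j))
    (p q p' q' : ℕ)
    (X Y : Set (Fin n)) (hXY : X ∪ Y = Set.univ) (hdXY : Disjoint X Y) :
    letI α₁ := n * (2*p*q + q^2 + 6*q + 3*(p+q)*(n-1))
    letI α₂ := m * (2*p'*q' + q'^2 + 2*p' + 2*(p'+q')*(m-1))
    letI A : Set (RVert n m p q p' q') := cutA ep1 ep2 X Y
    letI B : Set (RVert n m p q p' q') := cutA ep1 ep2 Y X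
    α₁ + α₂ + 2*q'*(cutSize G X Y) ≤ cutSize (reductionGraph n m p q p' q' ep1 ep2) A B ∧
      cutSize (reductionGraph n m p q p' q' ep1 ep2) A B ≤
        α₁ + α₂ + 2*q'*(cutSize G X Y) + 9*n^2 := by
  obtain rfl : Y = Xᶜ := (IsCompl.compl_eq ⟨hdXY, codisjoint_iff.2 hXY⟩).symm
  have hcut := reductionGraph.cutSize_cutA_eq (p := p) (q := q) (p' := p') (q' := q')
    (ep1 := ep1) (ep2 := ep2) X
  rw [reductionGraph.crossCount_links_vGadgets X hcubic hlt hedges hinj,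
    reductionGraph.crossCount_links_eGadgets, ← cutSize_compl_eq_card_crossing hedges hlt hinj X]
    at hcut
  have hLL := reductionGraph.cutCount_links_le (p := p) (q := q) (p' := p') (q' := q') X
    hcubic hlt hedges hinj
  constructor <;> · rw [hcut]; linarith

/-- for every cut `[X,Y]` of `G`, the cut `[A,B] = f(X,Y)` of `G'`
satisfies `α₁ + α₂ + 2q'·|E_G(X,Y)| ≤ |E_G'(A,B)| ≤ α₁ + α₂ + 2q'·|E_G(X,Y)| + 9n²`. -/
theorem reductionGraph_cut_count (n m : ℕ) (hn : 4 ≤ n) (G : SimpleGraph (Fin n))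
    (hcubic : ∀ v : Fin n, (G.neighborSet v).ncard = 3)
    (ep1 ep2 : Fin m → Fin n) (hlt : ∀ j, ep1 j < ep2 j)
    (hedges : ∀ u v : Fin n,
      G.Adj u v ↔ ∃ j, (ep1 j = u ∧ ep2 j = v) ∨ (ep1 j = v ∧ ep2 j = u))
    (hinj : Function.Injective fun j => (ep1 j, ep2 j))
    (p q p' q' : ℕ) (hp : 0 < p) (hq : 0 < q) (hp' : 0 < p') (hq' : 0 < q')
    (X Y : Set (Fin n)) (hXY : X ∪ Y = Set.univ) (hdXY : Disjoint X Y) :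
    letI α₁ := n * (2*p*q + q^2 + 6*q + 3*(p+q)*(n-1))
    letI α₂ := m * (2*p'*q' + q'^2 + 2*p' + 2*(p'+q')*(m-1))
    letI A : Set (RVert n m p q p' q') := cutA ep1 ep2 X Y
    letI B : Set (RVert n m p q p' q') := cutA ep1 ep2 Y X
    α₁ + α₂ + 2*q'*(cutSize G X Y) ≤ cutSize (reductionGraph n m p q p' q' ep1 ep2) A B ∧
      cutSize (reductionGraph n m p q p' q' ep1 ep2) A B ≤
        α₁ + α₂ + 2*q'*(cutSize G X Y) + 9*n^2 :=
  reductionGraph_cut_count_general n m G hcubic ep1 ep2 hlt hedges hinj p q p' q' X Y hXY hdXY
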